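/- arXiv:1805.10573 — 8 statements merged into one kernel-verified Lean document; each statement's English description precedes it below -/
import Mathlib

section
/- For four positive reals $r_1,r_2,r_3,r_4$ with $r_i = \min\{r_1,r_2,r_3,r_4\}$, the inequality $1/r_i \leq 1/r_j + 1/r_k + 1/r_l - 2\sqrt{1/(r_j r_k)+1/(r_j r_l)+1/(r_k r_l)}$ cannot hold, where $\{j,k,l\} = \{1,2,3,4\}\setminus\{i\}$. -/
theorem stmt1 (r : Fin 4 → ℝ) (hr : ∀ m, 0 < r m) (i j k l : Fin 4)
    (hset : ({i, j, k, l} : Finset (Fin 4)) = Finset.univ)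
    (hmin : ∀ m, r i ≤ r m) :
    ¬ (1 / r i ≤ 1 / r j + 1 / r k + 1 / r l -
      2 * Real.sqrt (1 / (r j * r k) + 1 / (r j * r l) + 1 / (r k * r l))) := by
  intro h
  set x := 1 / r j with hx
  set y := 1 / r k with hy
  set z := 1 / r l with hz
  set a := 1 / r i with ha
  have hxp : 0 < x := one_div_pos.2 (hr j)
  have hyp : 0 < y := one_div_pos.2 (hr k)
  have hzp : 0 < z := one_div_pos.2 (hr l)
  have hax : x ≤ a := one_div_le_one_div_of_le (hr i) (hmin j)
  have hay : y ≤ a := one_div_le_one_div_of_le (hr i) (hmin k)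
  have haz : z ≤ a := one_div_le_one_div_of_le (hr i) (hmin l)
  have hS : 1 / (r j * r k) + 1 / (r j * r l) + 1 / (r k * r l)
      = x * y + x * z + y * z := by
    rw [hx, hy, hz, one_div_mul_one_div, one_div_mul_one_div, one_div_mul_one_div]
  rw [hS] at h
  have hSpos : 0 < x * y + x * z + y * z := by positivity
  have hsq : Real.sqrt (x * y + x * z + y * z) ^ 2 = x * y + x * z + y * z :=
    Real.sq_sqrt hSpos.le
  have hsnn : 0 ≤ Real.sqrt (x * y + x * z + y * z) := Real.sqrt_nonneg _
  have ht : 2 * Real.sqrt (x * y + x * z + y * z) ≤ x + y + z - a := by linarith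
  have htnn : 0 ≤ x + y + z - a := le_trans (by positivity) ht
  have hsq2 : 4 * (x * y + x * z + y * z) ≤ (x + y + z - a) ^ 2 := by
    nlinarith [mul_self_le_mul_self (by positivity : (0:ℝ) ≤ 2 * Real.sqrt (x * y + x * z + y * z)) ht]
  nlinarith [mul_nonneg (sub_nonneg.2 hax) (sub_nonneg.2 hay),
    mul_nonneg (sub_nonneg.2 hay) (sub_nonneg.2 haz),
    mul_nonneg (sub_nonneg.2 hax) (sub_nonneg.2 haz),
    mul_pos hxp hyp, mul_pos hyp hzp, mul_pos hxp hzp]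
end

section
/- For four positive reals $r_1,r_2,r_3,r_4$, if $Q_{1234} = (\sum_i 1/r_i)^2 - 2\sum_i 1/r_i^2 \leq 0$, then the set $\{r_1,r_2,r_3,r_4\}$ has a strict minimum: there exists a unique index $i$ with $r_i < r_j$ for all $j \neq i$. Moreover, for this index $i$, $1/r_i \geq 1/r_j + 1/r_k + 1/r_l + 2\sqrt{1/(r_j r_k)+1/(r_j r_l)+1/(r_k r_l)}$ where $\{j,k,l\}=\{1,2,3,4\}\setminus\{i\}$. -/
/-!
Pass to curvatures `κ m = 1 / r m` and let `a` be the largest one, `s` the sum and `p` the second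
elementary symmetric function of the other three. Then `Q = 4 p - (a - s) ^ 2`, so `Q ≤ 0` gives
`|a - s| ≥ 2 √p`. The branch `s - a ≥ 2 √p` is impossible: if `z` is the largest of the other
three curvatures `x, y, z`, then `s - a ≤ x + y` and `(x + y) ^ 2 < 4 p` because `z ≥ x, y`. Hence `a ≥ s + 2 √p`,
which exceeds each of the other curvatures, so the smallest radius is attained only once.
-/

lemma descartes_quadratic_eq (a x y z : ℝ) :
    (a + x + y + z) ^ 2 - 2 * (a ^ 2 + x ^ 2 + y ^ 2 + z ^ 2) =
      4 * (x * y + x * z + y * z) - (a - (x + y + z)) ^ 2 := by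
  ring

lemma add_sub_lt_two_mul_sqrt_of_le {a x y z : ℝ} (hx : 0 < x) (hy : 0 < y) (hxz : x ≤ z)
    (hyz : y ≤ z) (hza : z ≤ a) : x + y + z - a < 2 * √(x * y + x * z + y * z) := by
  have hz : 0 < z := hx.trans_le hxz
  have hsq : (x + y) ^ 2 < (2 * √(x * y + x * z + y * z)) ^ 2 := by
    rw [mul_pow, Real.sq_sqrt (by positivity)]
    nlinarith [mul_pos hx hy, mul_le_mul_of_nonneg_left hxz hx.le,
      mul_le_mul_of_nonneg_left hyz hy.le]
  linarith [lt_of_pow_lt_pow_left₀ 2 (by positivity) hsq]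

lemma add_sub_lt_two_mul_sqrt {a x y z : ℝ} (hx : 0 < x) (hy : 0 < y) (hz : 0 < z)
    (hxa : x ≤ a) (hya : y ≤ a) (hza : z ≤ a) :
    x + y + z - a < 2 * √(x * y + x * z + y * z) := by
  rcases le_total x y with hxy | hyx
  · rcases le_total y z with hyz | hzy
    · exact add_sub_lt_two_mul_sqrt_of_le hx hy (hxy.trans hyz) hyz hza
    · convert add_sub_lt_two_mul_sqrt_of_le hx hz hxy hzy hya using 2 <;> ring_nf
  · rcases le_total x z with hxz | hzx
    · exact add_sub_lt_two_mul_sqrt_of_le hx hy hxz (hyx.trans hxz) hza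
    · convert add_sub_lt_two_mul_sqrt_of_le hy hz hyx hzx hxa using 2 <;> ring_nf

lemma le_of_descartes_quadratic_nonpos {a x y z : ℝ} (hx : 0 < x) (hy : 0 < y) (hz : 0 < z)
    (hxa : x ≤ a) (hya : y ≤ a) (hza : z ≤ a)
    (hQ : (a + x + y + z) ^ 2 - 2 * (a ^ 2 + x ^ 2 + y ^ 2 + z ^ 2) ≤ 0) :
    x + y + z + 2 * √(x * y + x * z + y * z) ≤ a := by
  rw [descartes_quadratic_eq, sub_nonpos] at hQ
  have habs : 2 * √(x * y + x * z + y * z) ≤ |a - (x + y + z)| := by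
    rw [← abs_of_nonneg (by positivity : 0 ≤ 2 * √(x * y + x * z + y * z)), ← sq_le_sq,
      mul_pow, Real.sq_sqrt (by positivity)]
    linarith
  rcases le_abs'.1 habs with h | h
  · linarith [add_sub_lt_two_mul_sqrt hx hy hz hxa hya hza]
  · linarith

lemma Fin.sum_univ_four_of_insert_eq_univ {M : Type*} [AddCommMonoid M] (f : Fin 4 → M)
    {i j k l : Fin 4} (h : ({i, j, k, l} : Finset (Fin 4)) = Finset.univ) :
    ∑ m, f m = f i + f j + f k + f l := by
  obtain ⟨hij, hik, hil, hjk, hjl, hkl⟩ : i ≠ j ∧ i ≠ k ∧ i ≠ l ∧ j ≠ k ∧ j ≠ l ∧ k ≠ l := by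
    revert i j k l; decide
  rw [← h, Finset.sum_insert (by simp [hij, hik, hil]), Finset.sum_insert (by simp [hjk, hjl]),
    Finset.sum_pair hkl, add_assoc, add_assoc]

lemma Fin.exists_insert_eq_univ_of_ne {i j : Fin 4} (hij : i ≠ j) :
    ∃ k l : Fin 4, ({i, j, k, l} : Finset (Fin 4)) = Finset.univ := by
  revert i j; decide

lemma le_of_descartes_nonpos_of_forall_le (κ : Fin 4 → ℝ) (hκ : ∀ m, 0 < κ m)
    (hQ : (∑ m, κ m) ^ 2 - 2 * ∑ m, κ m ^ 2 ≤ 0) {i : Fin 4} (hi : ∀ m, κ m ≤ κ i)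
    {j k l : Fin 4} (h : ({i, j, k, l} : Finset (Fin 4)) = Finset.univ) :
    κ j + κ k + κ l + 2 * √(κ j * κ k + κ j * κ l + κ k * κ l) ≤ κ i := by
  rw [Fin.sum_univ_four_of_insert_eq_univ κ h,
    Fin.sum_univ_four_of_insert_eq_univ (κ · ^ 2) h] at hQ
  exact le_of_descartes_quadratic_nonpos (hκ j) (hκ k) (hκ l) (hi j) (hi k) (hi l) hQ

lemma lt_of_descartes_nonpos_of_forall_le (κ : Fin 4 → ℝ) (hκ : ∀ m, 0 < κ m)
    (hQ : (∑ m, κ m) ^ 2 - 2 * ∑ m, κ m ^ 2 ≤ 0) {i : Fin 4} (hi : ∀ m, κ m ≤ κ i)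
    {j : Fin 4} (hji : j ≠ i) : κ j < κ i := by
  obtain ⟨k, l, h⟩ := Fin.exists_insert_eq_univ_of_ne hji.symm
  have hbound := le_of_descartes_nonpos_of_forall_le κ hκ hQ hi h
  have hsqrt := Real.sqrt_nonneg (κ j * κ k + κ j * κ l + κ k * κ l)
  linarith [hκ k, hκ l]

theorem stmt2 (r : Fin 4 → ℝ) (hr : ∀ m, 0 < r m)
    (hQ : (∑ m, 1 / r m) ^ 2 - 2 * ∑ m, (1 / r m) ^ 2 ≤ 0) :
    ∃! i : Fin 4, (∀ j, j ≠ i → r i < r j) ∧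
      ∀ j k l : Fin 4, ({i, j, k, l} : Finset (Fin 4)) = Finset.univ →
        1 / r i ≥ 1 / r j + 1 / r k + 1 / r l +
          2 * Real.sqrt (1 / (r j * r k) + 1 / (r j * r l) + 1 / (r k * r l)) := by
  obtain ⟨i, hi⟩ := Finite.exists_min r
  have hκ : ∀ m, 0 < 1 / r m := fun m => one_div_pos.2 (hr m)
  have hmax : ∀ m, 1 / r m ≤ 1 / r i := fun m => one_div_le_one_div_of_le (hr i) (hi m)
  have hstrict : ∀ j, j ≠ i → r i < r j := fun j hji =>
    (one_div_lt_one_div (hr j) (hr i)).1 (lt_of_descartes_nonpos_of_forall_le _ hκ hQ hmax hji)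
  refine ⟨i, ⟨hstrict, fun j k l h => ?_⟩, fun i' hi' => ?_⟩
  · simp only [← one_div_mul_one_div]
    exact le_of_descartes_nonpos_of_forall_le _ hκ hQ hmax h
  · by_contra hne
    exact (hstrict i' hne).asymm (hi'.1 i (Ne.symm hne))
end

section
/- The complement of the set $\Omega_{1234} = \{r \in \mathbb{R}^4_{>0} : Q_{1234}(r) > 0\}$ in $\mathbb{R}^4_{>0}$ equals the disjoint union $D_1 \cup D_2 \cup D_3 \cup D_4$. -/
/-- The `i`-th virtual tetrahedron space `D_i`. -/
def virtualSpace (i : Fin 4) : Set (Fin 4 → ℝ) :=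
  {r | (∀ m, 0 < r m) ∧ ∀ j k l : Fin 4, ({i, j, k, l} : Finset (Fin 4)) = Finset.univ →
    1 / r i ≥ 1 / r j + 1 / r k + 1 / r l +
      2 * Real.sqrt (1 / (r j * r k) + 1 / (r j * r l) + 1 / (r k * r l))}

/-- The space of nondegenerate (real) conformal tetrahedra `Ω_{1234}`. -/
def Omega1234 : Set (Fin 4 → ℝ) :=
  {r | (∀ m, 0 < r m) ∧ 0 < (∑ m, 1 / r m) ^ 2 - 2 * ∑ m, (1 / r m) ^ 2}

private lemma Hlem (a b c d : ℝ) (hb : 0 < b) (hc : 0 < c) (hd : 0 < d)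
    (hab : b ≤ a) (hcb : c ≤ b) (hdb : d ≤ b)
    (hQ : (a+b+c+d)^2 - 2*(a^2+b^2+c^2+d^2) ≤ 0) :
    b + c + d + 2*Real.sqrt (b*c+b*d+c*d) ≤ a := by
  have hp0 : (0:ℝ) < b*c+b*d+c*d := by positivity
  set s := Real.sqrt (b*c+b*d+c*d) with hs
  have hs0 : 0 < s := Real.sqrt_pos.mpr hp0
  have hs2 : s^2 = b*c+b*d+c*d := Real.sq_sqrt hp0.le
  have h1 : b+c+d < a + 2*s := by
    by_contra hcon
    push_neg at hcon
    have h2 : 2*s ≤ c + d := by linarith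
    have h3 : 4*(b*c+b*d+c*d) ≤ (c+d)^2 := by nlinarith [h2, hs0, hs2]
    nlinarith [h3, hcb, hdb, hc, hd, hb]
  have h4 : (2*s)^2 ≤ (a - (b+c+d))^2 := by nlinarith [hs2]
  nlinarith [h4, h1, hs0]

private lemma Hmax (a b c d : ℝ) (hb : 0 < b) (hc : 0 < c) (hd : 0 < d)
    (hab : b ≤ a) (hac : c ≤ a) (had : d ≤ a)
    (hQ : (a+b+c+d)^2 - 2*(a^2+b^2+c^2+d^2) ≤ 0) :
    b + c + d + 2*Real.sqrt (b*c+b*d+c*d) ≤ a := by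
  rcases le_total c b with h1 | h1
  · rcases le_total d b with h2 | h2
    · exact Hlem a b c d hb hc hd hab h1 h2 hQ
    · have := Hlem a d b c hd hb hc had h2 (le_trans h1 h2) (by nlinarith [hQ])
      rw [show d*b+d*c+b*c = b*c+b*d+c*d from by ring] at this
      linarith
  · rcases le_total d c with h2 | h2
    · have := Hlem a c b d hc hb hd hac h1 h2 (by nlinarith [hQ])
      rw [show c*b+c*d+b*d = b*c+b*d+c*d from by ring] at this
      linarith
    · have := Hlem a d b c hd hb hc had (le_trans h1 h2) h2 (by nlinarith [hQ])
      rw [show d*b+d*c+b*c = b*c+b*d+c*d from by ring] at this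
      linarith

private lemma keyQ (a b c d : ℝ) (ha : 0 < a) (hb : 0 < b) (hc : 0 < c) (hd : 0 < d)
    (hQ : (a+b+c+d)^2 - 2*(a^2+b^2+c^2+d^2) ≤ 0) :
    (b+c+d+2*Real.sqrt (b*c+b*d+c*d) ≤ a) ∨ (a+c+d+2*Real.sqrt (a*c+a*d+c*d) ≤ b) ∨
    (a+b+d+2*Real.sqrt (a*b+a*d+b*d) ≤ c) ∨ (a+b+c+2*Real.sqrt (a*b+a*c+b*c) ≤ d) := by
  rcases le_total a b with h1 | h1
  · rcases le_total b c with h2 | h2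
    · rcases le_total c d with h3 | h3
      · exact Or.inr (Or.inr (Or.inr (Hmax d a b c ha hb hc (by linarith) (by linarith) h3
          (by nlinarith [hQ]))))
      · exact Or.inr (Or.inr (Or.inl (Hmax c a b d ha hb hd (by linarith) h2 h3
          (by nlinarith [hQ]))))
    · rcases le_total b d with h3 | h3
      · exact Or.inr (Or.inr (Or.inr (Hmax d a b c ha hb hc (by linarith) h3 (by linarith)
          (by nlinarith [hQ]))))
      · exact Or.inr (Or.inl (Hmax b a c d ha hc hd h1 h2 h3 (by nlinarith [hQ])))
  · rcases le_total a c with h2 | h2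
    · rcases le_total c d with h3 | h3
      · exact Or.inr (Or.inr (Or.inr (Hmax d a b c ha hb hc (by linarith) (by linarith) h3
          (by nlinarith [hQ]))))
      · exact Or.inr (Or.inr (Or.inl (Hmax c a b d ha hb hd h2 (by linarith) h3
          (by nlinarith [hQ]))))
    · rcases le_total a d with h3 | h3
      · exact Or.inr (Or.inr (Or.inr (Hmax d a b c ha hb hc h3 (by linarith) (by linarith)
          (by nlinarith [hQ]))))
      · exact Or.inl (Hmax a b c d hb hc hd h1 h2 h3 hQ)

private lemma Hrev (a b c d : ℝ) (hb : 0 < b) (hc : 0 < c) (hd : 0 < d)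
    (h : b + c + d + 2*Real.sqrt (b*c+b*d+c*d) ≤ a) :
    (a+b+c+d)^2 - 2*(a^2+b^2+c^2+d^2) ≤ 0 := by
  have hp0 : (0:ℝ) < b*c+b*d+c*d := by positivity
  have hs2 : Real.sqrt (b*c+b*d+c*d)^2 = b*c+b*d+c*d := Real.sq_sqrt hp0.le
  nlinarith [hs2, Real.sqrt_nonneg (b*c+b*d+c*d), h]

private lemma memD0 (r : Fin 4 → ℝ) (hr : ∀ m, 0 < r m)
    (h : 1/r 1 + 1/r 2 + 1/r 3
      + 2*Real.sqrt (1/r 1*(1/r 2) + 1/r 1*(1/r 3) + 1/r 2*(1/r 3)) ≤ 1/r 0) :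
    r ∈ virtualSpace 0 := by
  refine ⟨hr, ?_⟩
  intro j k l hset
  obtain ⟨hj, hk, hl, hjk, hjl, hkl⟩ :=
    (by decide : ∀ j k l : Fin 4, ({0,j,k,l} : Finset (Fin 4)) = Finset.univ →
      (j = 1 ∨ j = 2 ∨ j = 3) ∧ (k = 1 ∨ k = 2 ∨ k = 3) ∧ (l = 1 ∨ l = 2 ∨ l = 3) ∧
      j ≠ k ∧ j ≠ l ∧ k ≠ l) j k l hset
  have e1 : 1/r j + 1/r k + 1/r l = 1/r 1 + 1/r 2 + 1/r 3 := by
    rcases hj with rfl|rfl|rfl <;> rcases hk with rfl|rfl|rfl <;> rcases hl with rfl|rfl|rfl <;>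
      first | exact absurd rfl hjk | exact absurd rfl hjl | exact absurd rfl hkl | ring
  have e2 : 1/(r j * r k) + 1/(r j * r l) + 1/(r k * r l)
      = 1/r 1*(1/r 2) + 1/r 1*(1/r 3) + 1/r 2*(1/r 3) := by
    rcases hj with rfl|rfl|rfl <;> rcases hk with rfl|rfl|rfl <;> rcases hl with rfl|rfl|rfl <;>
      first | exact absurd rfl hjk | exact absurd rfl hjl | exact absurd rfl hkl | ring
  rw [ge_iff_le, e1, e2]
  exact h

private lemma memD1 (r : Fin 4 → ℝ) (hr : ∀ m, 0 < r m)
    (h : 1/r 0 + 1/r 2 + 1/r 3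
      + 2*Real.sqrt (1/r 0*(1/r 2) + 1/r 0*(1/r 3) + 1/r 2*(1/r 3)) ≤ 1/r 1) :
    r ∈ virtualSpace 1 := by
  refine ⟨hr, ?_⟩
  intro j k l hset
  obtain ⟨hj, hk, hl, hjk, hjl, hkl⟩ :=
    (by decide : ∀ j k l : Fin 4, ({1,j,k,l} : Finset (Fin 4)) = Finset.univ →
      (j = 0 ∨ j = 2 ∨ j = 3) ∧ (k = 0 ∨ k = 2 ∨ k = 3) ∧ (l = 0 ∨ l = 2 ∨ l = 3) ∧
      j ≠ k ∧ j ≠ l ∧ k ≠ l) j k l hset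
  have e1 : 1/r j + 1/r k + 1/r l = 1/r 0 + 1/r 2 + 1/r 3 := by
    rcases hj with rfl|rfl|rfl <;> rcases hk with rfl|rfl|rfl <;> rcases hl with rfl|rfl|rfl <;>
      first | exact absurd rfl hjk | exact absurd rfl hjl | exact absurd rfl hkl | ring
  have e2 : 1/(r j * r k) + 1/(r j * r l) + 1/(r k * r l)
      = 1/r 0*(1/r 2) + 1/r 0*(1/r 3) + 1/r 2*(1/r 3) := by
    rcases hj with rfl|rfl|rfl <;> rcases hk with rfl|rfl|rfl <;> rcases hl with rfl|rfl|rfl <;>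
      first | exact absurd rfl hjk | exact absurd rfl hjl | exact absurd rfl hkl | ring
  rw [ge_iff_le, e1, e2]
  exact h

private lemma memD2 (r : Fin 4 → ℝ) (hr : ∀ m, 0 < r m)
    (h : 1/r 0 + 1/r 1 + 1/r 3
      + 2*Real.sqrt (1/r 0*(1/r 1) + 1/r 0*(1/r 3) + 1/r 1*(1/r 3)) ≤ 1/r 2) :
    r ∈ virtualSpace 2 := by
  refine ⟨hr, ?_⟩
  intro j k l hset
  obtain ⟨hj, hk, hl, hjk, hjl, hkl⟩ :=
    (by decide : ∀ j k l : Fin 4, ({2,j,k,l} : Finset (Fin 4)) = Finset.univ →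
      (j = 0 ∨ j = 1 ∨ j = 3) ∧ (k = 0 ∨ k = 1 ∨ k = 3) ∧ (l = 0 ∨ l = 1 ∨ l = 3) ∧
      j ≠ k ∧ j ≠ l ∧ k ≠ l) j k l hset
  have e1 : 1/r j + 1/r k + 1/r l = 1/r 0 + 1/r 1 + 1/r 3 := by
    rcases hj with rfl|rfl|rfl <;> rcases hk with rfl|rfl|rfl <;> rcases hl with rfl|rfl|rfl <;>
      first | exact absurd rfl hjk | exact absurd rfl hjl | exact absurd rfl hkl | ring
  have e2 : 1/(r j * r k) + 1/(r j * r l) + 1/(r k * r l)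
      = 1/r 0*(1/r 1) + 1/r 0*(1/r 3) + 1/r 1*(1/r 3) := by
    rcases hj with rfl|rfl|rfl <;> rcases hk with rfl|rfl|rfl <;> rcases hl with rfl|rfl|rfl <;>
      first | exact absurd rfl hjk | exact absurd rfl hjl | exact absurd rfl hkl | ring
  rw [ge_iff_le, e1, e2]
  exact h

private lemma memD3 (r : Fin 4 → ℝ) (hr : ∀ m, 0 < r m)
    (h : 1/r 0 + 1/r 1 + 1/r 2
      + 2*Real.sqrt (1/r 0*(1/r 1) + 1/r 0*(1/r 2) + 1/r 1*(1/r 2)) ≤ 1/r 3) :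
    r ∈ virtualSpace 3 := by
  refine ⟨hr, ?_⟩
  intro j k l hset
  obtain ⟨hj, hk, hl, hjk, hjl, hkl⟩ :=
    (by decide : ∀ j k l : Fin 4, ({3,j,k,l} : Finset (Fin 4)) = Finset.univ →
      (j = 0 ∨ j = 1 ∨ j = 2) ∧ (k = 0 ∨ k = 1 ∨ k = 2) ∧ (l = 0 ∨ l = 1 ∨ l = 2) ∧
      j ≠ k ∧ j ≠ l ∧ k ≠ l) j k l hset
  have e1 : 1/r j + 1/r k + 1/r l = 1/r 0 + 1/r 1 + 1/r 2 := by
    rcases hj with rfl|rfl|rfl <;> rcases hk with rfl|rfl|rfl <;> rcases hl with rfl|rfl|rfl <;>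
      first | exact absurd rfl hjk | exact absurd rfl hjl | exact absurd rfl hkl | ring
  have e2 : 1/(r j * r k) + 1/(r j * r l) + 1/(r k * r l)
      = 1/r 0*(1/r 1) + 1/r 0*(1/r 2) + 1/r 1*(1/r 2) := by
    rcases hj with rfl|rfl|rfl <;> rcases hk with rfl|rfl|rfl <;> rcases hl with rfl|rfl|rfl <;>
      first | exact absurd rfl hjk | exact absurd rfl hjl | exact absurd rfl hkl | ring
  rw [ge_iff_le, e1, e2]
  exact h

/-- From membership in `virtualSpace i`, `1/r i` strictly dominates the other `1/r m`. -/
private lemma lt_of_mem (i : Fin 4) (r : Fin 4 → ℝ) (h : r ∈ virtualSpace i) :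
    ∀ m : Fin 4, m ≠ i → 1/r m < 1/r i := by
  intro m hm
  have p0 : 0 < 1/r 0 := by have := h.1 0; positivity
  have p1 : 0 < 1/r 1 := by have := h.1 1; positivity
  have p2 : 0 < 1/r 2 := by have := h.1 2; positivity
  have p3 : 0 < 1/r 3 := by have := h.1 3; positivity
  rcases (by decide : ∀ i : Fin 4, i = 0 ∨ i = 1 ∨ i = 2 ∨ i = 3) i with rfl|rfl|rfl|rfl
  · have ha := h.2 1 2 3 (by decide)
    have hs := Real.sqrt_nonneg (1/(r 1 * r 2) + 1/(r 1 * r 3) + 1/(r 2 * r 3))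
    rcases (by decide : ∀ m : Fin 4, m = 0 ∨ m = 1 ∨ m = 2 ∨ m = 3) m with rfl|rfl|rfl|rfl <;>
      first | exact absurd rfl hm | linarith
  · have ha := h.2 0 2 3 (by decide)
    have hs := Real.sqrt_nonneg (1/(r 0 * r 2) + 1/(r 0 * r 3) + 1/(r 2 * r 3))
    rcases (by decide : ∀ m : Fin 4, m = 0 ∨ m = 1 ∨ m = 2 ∨ m = 3) m with rfl|rfl|rfl|rfl <;>
      first | exact absurd rfl hm | linarith
  · have ha := h.2 0 1 3 (by decide)
    have hs := Real.sqrt_nonneg (1/(r 0 * r 1) + 1/(r 0 * r 3) + 1/(r 1 * r 3))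
    rcases (by decide : ∀ m : Fin 4, m = 0 ∨ m = 1 ∨ m = 2 ∨ m = 3) m with rfl|rfl|rfl|rfl <;>
      first | exact absurd rfl hm | linarith
  · have ha := h.2 0 1 2 (by decide)
    have hs := Real.sqrt_nonneg (1/(r 0 * r 1) + 1/(r 0 * r 2) + 1/(r 1 * r 2))
    rcases (by decide : ∀ m : Fin 4, m = 0 ∨ m = 1 ∨ m = 2 ∨ m = 3) m with rfl|rfl|rfl|rfl <;>
      first | exact absurd rfl hm | linarith

theorem stmt4 :
    ({r : Fin 4 → ℝ | ∀ m, 0 < r m} \ Omega1234 = ⋃ i, virtualSpace i) ∧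
    (∀ i i' : Fin 4, i ≠ i' → Disjoint (virtualSpace i) (virtualSpace i')) := by
  constructor
  · ext r
    simp only [Set.mem_diff, Set.mem_setOf_eq, Set.mem_iUnion]
    constructor
    · rintro ⟨hr, hΩ⟩
      have p0 : 0 < 1/r 0 := by have := hr 0; positivity
      have p1 : 0 < 1/r 1 := by have := hr 1; positivity
      have p2 : 0 < 1/r 2 := by have := hr 2; positivity
      have p3 : 0 < 1/r 3 := by have := hr 3; positivity
      have hQ : (1/r 0 + 1/r 1 + 1/r 2 + 1/r 3)^2
          - 2*((1/r 0)^2 + (1/r 1)^2 + (1/r 2)^2 + (1/r 3)^2) ≤ 0 := by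
        by_contra hpos
        push_neg at hpos
        exact hΩ ⟨hr, by simp only [Fin.sum_univ_four]; linarith⟩
      rcases keyQ (1/r 0) (1/r 1) (1/r 2) (1/r 3) p0 p1 p2 p3 hQ with h|h|h|h
      · exact ⟨0, memD0 r hr h⟩
      · exact ⟨1, memD1 r hr h⟩
      · exact ⟨2, memD2 r hr h⟩
      · exact ⟨3, memD3 r hr h⟩
    · rintro ⟨i, hi⟩
      have hr := hi.1
      have p0 : 0 < 1/r 0 := by have := hr 0; positivity
      have p1 : 0 < 1/r 1 := by have := hr 1; positivity
      have p2 : 0 < 1/r 2 := by have := hr 2; positivity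
      have p3 : 0 < 1/r 3 := by have := hr 3; positivity
      refine ⟨hr, fun hmem => ?_⟩
      have hpos := hmem.2
      simp only [Fin.sum_univ_four] at hpos
      rcases (by decide : ∀ i : Fin 4, i = 0 ∨ i = 1 ∨ i = 2 ∨ i = 3) i with rfl|rfl|rfl|rfl
      · have ha := hi.2 1 2 3 (by decide)
        rw [ge_iff_le, show 1/(r 1 * r 2) + 1/(r 1 * r 3) + 1/(r 2 * r 3)
          = 1/r 1*(1/r 2) + 1/r 1*(1/r 3) + 1/r 2*(1/r 3) from by ring] at ha
        have := Hrev (1/r 0) (1/r 1) (1/r 2) (1/r 3) p1 p2 p3 ha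
        nlinarith [this, hpos]
      · have ha := hi.2 0 2 3 (by decide)
        rw [ge_iff_le, show 1/(r 0 * r 2) + 1/(r 0 * r 3) + 1/(r 2 * r 3)
          = 1/r 0*(1/r 2) + 1/r 0*(1/r 3) + 1/r 2*(1/r 3) from by ring] at ha
        have := Hrev (1/r 1) (1/r 0) (1/r 2) (1/r 3) p0 p2 p3 ha
        nlinarith [this, hpos]
      · have ha := hi.2 0 1 3 (by decide)
        rw [ge_iff_le, show 1/(r 0 * r 1) + 1/(r 0 * r 3) + 1/(r 1 * r 3)
          = 1/r 0*(1/r 1) + 1/r 0*(1/r 3) + 1/r 1*(1/r 3) from by ring] at ha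
        have := Hrev (1/r 2) (1/r 0) (1/r 1) (1/r 3) p0 p1 p3 ha
        nlinarith [this, hpos]
      · have ha := hi.2 0 1 2 (by decide)
        rw [ge_iff_le, show 1/(r 0 * r 1) + 1/(r 0 * r 2) + 1/(r 1 * r 2)
          = 1/r 0*(1/r 1) + 1/r 0*(1/r 2) + 1/r 1*(1/r 2) from by ring] at ha
        have := Hrev (1/r 3) (1/r 0) (1/r 1) (1/r 2) p0 p1 p2 ha
        nlinarith [this, hpos]
  · intro i i' hne
    rw [Set.disjoint_left]
    intro r h h'
    have h1 := lt_of_mem i r h i' hne.symm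
    have h2 := lt_of_mem i' r h' i hne
    linarith
end

section
/- If $r_i$ is the strict minimum of positive reals $r_1,r_2,r_3,r_4$, $Q_{1234}=0$, and moreover the curvatures-like quantities satisfy the monotonicity condition (for the single tetrahedron, $K_m \leq K_n$ iff $r_m \leq r_n$), then along the flow $dr_m/dt = (c - K_m) r_m$ one has $dQ/dt \geq 0$ at $Q = 0$, with equality only if $K_1=K_2=K_3=K_4$. -/
/-! Write `s m = 1 / r m` and `w m = s m * (∑ n, s n - 2 * s m)`. Along the flow, `dQ/dt` is
`2 ∑ w m * (K m - c)`, and `∑ w m = Q = 0` lets us replace `c` by the smallest curvature `K i`.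
Since `s i` is the strict maximum of the `s m`, every `w m` with `m ≠ i` is positive, while
`K m - K i ≥ 0` by monotonicity; so `dQ/dt ≥ 0`, with equality only if all `K m` equal `K i`. -/

open Finset

section

variable {ι : Type*} [Fintype ι]

theorem sum_mul_sum_sub_two_mul (s : ι → ℝ) :
    ∑ m, s m * (∑ n, s n - 2 * s m) = (∑ m, s m) ^ 2 - 2 * ∑ m, s m ^ 2 := by
  rw [sq, sum_mul, mul_sum, ← sum_sub_distrib]
  exact sum_congr rfl fun m _ => by ring

theorem sum_sub_two_mul_pos [DecidableEq ι] {s : ι → ℝ} (hs : ∀ n, 0 ≤ s n) {i m : ι}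
    (hm : m ≠ i) (h : s m < s i) : 0 < ∑ n, s n - 2 * s m := by
  have hpair : s i + s m ≤ ∑ n, s n := by
    rw [← sum_pair hm.symm]
    exact sum_le_univ_sum_of_nonneg hs
  linarith

theorem sum_mul_sub_eq_of_sum_eq_zero (w K : ι → ℝ) (a c : ℝ) (hw : ∑ m, w m = 0) :
    ∑ m, w m * (K m - c) = ∑ m, w m * (K m - a) := by
  have hshift : ∀ m, w m * (K m - c) = w m * (K m - a) + w m * (a - c) := fun m => by ring
  simp only [hshift, sum_add_distrib, ← sum_mul, hw, zero_mul, add_zero]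

theorem sum_mul_sub_min_nonneg {w K : ι → ℝ} {i : ι} (hw : ∀ m, m ≠ i → 0 < w m)
    (hK : ∀ m, K i ≤ K m) :
    0 ≤ ∑ m, w m * (K m - K i) ∧ (∑ m, w m * (K m - K i) = 0 → ∀ m, K m = K i) := by
  have hterm : ∀ m ∈ univ, 0 ≤ w m * (K m - K i) := fun m _ => by
    by_cases hm : m = i
    · simp [hm]
    · exact mul_nonneg (hw m hm).le (sub_nonneg.2 (hK m))
  refine ⟨sum_nonneg hterm, fun h0 m => ?_⟩
  by_cases hm : m = i
  · rw [hm]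
  · have := (sum_eq_zero_iff_of_nonneg hterm).1 h0 m (mem_univ m)
    rcases mul_eq_zero.1 this with hw0 | hK0
    · exact absurd hw0 (hw m hm).ne'
    · linarith

theorem descartes_flow_term_eq {r : ι → ℝ} (hr : ∀ m, r m ≠ 0) (K : ι → ℝ) (c : ℝ) (m : ι) :
    (-(2 / (r m) ^ 2) * ((∑ n, 1 / r n) - 2 / r m)) * ((c - K m) * r m)
      = 2 * ((1 / r m) * (∑ n, 1 / r n - 2 * (1 / r m)) * (K m - c)) := by
  have := hr m
  field_simp
  ring

end

theorem stmt6 (r K : Fin 4 → ℝ) (hr : ∀ m, 0 < r m) (c : ℝ) (i : Fin 4)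
    (hmin : ∀ m, m ≠ i → r i < r m)
    (hmono : ∀ m n, r m ≤ r n ↔ K m ≤ K n)
    (hQ : (∑ m, 1 / r m) ^ 2 - 2 * ∑ m, (1 / r m) ^ 2 = 0) :
    0 ≤ ∑ m, (-(2 / (r m) ^ 2) * ((∑ n, 1 / r n) - 2 / r m)) * ((c - K m) * r m) ∧
    ((∑ m, (-(2 / (r m) ^ 2) * ((∑ n, 1 / r n) - 2 / r m)) * ((c - K m) * r m)) = 0 →
      ∀ m n, K m = K n) := by
  set s : Fin 4 → ℝ := fun m => 1 / r m
  set w : Fin 4 → ℝ := fun m => s m * (∑ n, s n - 2 * s m)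
  have hw : ∀ m, m ≠ i → 0 < w m := fun m hm =>
    mul_pos (one_div_pos.2 (hr m)) <| sum_sub_two_mul_pos (fun n => (one_div_pos.2 (hr n)).le)
      hm (one_div_lt_one_div_of_lt (hr i) (hmin m hm))
  have hK : ∀ m, K i ≤ K m := fun m => by
    rcases eq_or_ne m i with rfl | hm
    · rfl
    · exact (hmono i m).1 (hmin m hm).le
  have hdQ : ∑ m, (-(2 / (r m) ^ 2) * ((∑ n, 1 / r n) - 2 / r m)) * ((c - K m) * r m)
      = 2 * ∑ m, w m * (K m - K i) := by
    rw [sum_congr rfl fun m _ => descartes_flow_term_eq (fun n => (hr n).ne') K c m, ← mul_sum,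
      sum_mul_sub_eq_of_sum_eq_zero w K (K i) c (by rw [sum_mul_sum_sub_two_mul]; exact hQ)]
  obtain ⟨hnonneg, heq⟩ := sum_mul_sub_min_nonneg hw hK
  rw [hdQ]
  refine ⟨mul_nonneg zero_le_two hnonneg, fun h0 m n => ?_⟩
  have hall := heq (by linarith)
  rw [hall m, hall n]
end

section
/- Along the normalized combinatorial Yamabe flow $r_i' = (\lambda - K_i) r_i$, the CRG-functional satisfies $\frac{d}{dt}\lambda(r(t)) = -\|r\|_{\ell^1}^{-1} \sum_{i=1}^N r_i (K_i - \lambda)^2 \leq 0$; hence $\lambda(r(t))$ is non-increasing, and it is strictly decreasing at any time when $K$ is not constant. -/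
/-!
Write `S(r) = ∑ Kᵢ rᵢ` and `T(r) = ∑ rᵢ`, so that `λ = S / T`. Along the flow
`T' = ∑ (λ - Kᵢ) rᵢ = λ T - S = 0`, so the total mass is conserved and `λ(r(t)) = S(r(t)) / T`.
By the Schläfli identity `S' = ∑ Kᵢ rᵢ' = ∑ Kᵢ (λ - Kᵢ) rᵢ`, and since `λ` is the `r`-weighted
mean of `K` this equals minus the weighted variance `∑ rᵢ (Kᵢ - λ)²`, which is nonnegative and
vanishes only when `K` is constant.
-/

open Finset

section WeightedMean

variable {ι : Type*} [Fintype ι] (w K : ι → ℝ)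

/-- The junk value `0 / 0 = 0` is harmless here: a vanishing sum of nonnegative weights forces
every weight, hence also `∑ Kᵢ wᵢ`, to vanish. -/
lemma div_sum_mul_sum_eq_of_nonneg (hw : ∀ i, 0 ≤ w i) :
    (∑ j, K j * w j) / (∑ j, w j) * ∑ j, w j = ∑ j, K j * w j := by
  by_cases hT : ∑ j, w j = 0
  · have hzero : ∀ j, w j = 0 := fun j =>
      (sum_eq_zero_iff_of_nonneg fun j _ => hw j).1 hT j (mem_univ j)
    simp [hzero]
  · exact div_mul_cancel₀ _ hT

variable {w K} {c : ℝ}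

lemma sum_sub_mul_eq_zero_of_mul_sum_eq (hc : c * ∑ j, w j = ∑ j, K j * w j) :
    ∑ i, (c - K i) * w i = 0 := by
  simp only [sub_mul, sum_sub_distrib, ← mul_sum, hc, sub_self]

lemma sum_mul_sub_mul_eq_neg_sum_mul_sq_of_mul_sum_eq (hc : c * ∑ j, w j = ∑ j, K j * w j) :
    ∑ i, K i * ((c - K i) * w i) = -∑ i, w i * (K i - c) ^ 2 := by
  have hsplit : ∑ i, (K i * ((c - K i) * w i) + w i * (K i - c) ^ 2)
      = c * ∑ i, (c - K i) * w i := by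
    rw [mul_sum]
    exact sum_congr rfl fun i _ => by ring
  rw [sum_add_distrib, sum_sub_mul_eq_zero_of_mul_sum_eq hc, mul_zero] at hsplit
  linarith

lemma neg_inv_sum_mul_sum_mul_sq_nonpos (hw : ∀ i, 0 ≤ w i) :
    -(∑ i, w i)⁻¹ * ∑ i, w i * (K i - c) ^ 2 ≤ 0 := by
  rw [neg_mul, neg_nonpos]
  exact mul_nonneg (inv_nonneg.2 (sum_nonneg fun i _ => hw i))
    (sum_nonneg fun i _ => mul_nonneg (hw i) (sq_nonneg _))

lemma neg_inv_sum_mul_sum_mul_sq_neg (hw : ∀ i, 0 < w i) (hK : ¬ ∀ i j, K i = K j) :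
    -(∑ i, w i)⁻¹ * ∑ i, w i * (K i - c) ^ 2 < 0 := by
  obtain ⟨i, hi⟩ : ∃ i, K i ≠ c := by
    by_contra! hconst
    exact hK fun i j => (hconst i).trans (hconst j).symm
  have hterm : 0 < w i * (K i - c) ^ 2 := by
    have := hw i
    have := sub_ne_zero.2 hi
    positivity
  rw [neg_mul, neg_lt_zero]
  exact mul_pos (inv_pos.2 (sum_pos (fun j _ => hw j) ⟨i, mem_univ i⟩))
    (sum_pos' (fun j _ => mul_nonneg (hw j).le (sq_nonneg _)) ⟨i, mem_univ i, hterm⟩)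

end WeightedMean

lemma HasFDerivAt.comp_hasDerivAt_of_sum_smul_proj {ι : Type*} [Fintype ι]
    {f : (ι → ℝ) → ℝ} {a : ι → ℝ} {γ : ℝ → ι → ℝ} {v : ι → ℝ} {t : ℝ}
    (hf : HasFDerivAt f (∑ i, a i • (ContinuousLinearMap.proj i : (ι → ℝ) →L[ℝ] ℝ)) (γ t))
    (hγ : ∀ i, HasDerivAt (fun s => γ s i) (v i) t) :
    HasDerivAt (fun s => f (γ s)) (∑ i, a i * v i) t := by
  have h := hf.comp_hasDerivAt t (hasDerivAt_pi.2 hγ)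
  rwa [FunLike.coe_sum, Finset.sum_apply] at h

lemma sum_eq_of_hasDerivAt_sum_sub_mul {ι : Type*} [Fintype ι] {r : ℝ → ι → ℝ}
    {c : ℝ → ℝ} {K : ℝ → ι → ℝ} (hmean : ∀ s, c s * ∑ j, r s j = ∑ j, K s j * r s j)
    (hflow : ∀ s i, HasDerivAt (fun u => r u i) ((c s - K s i) * r s i) s) (s t : ℝ) :
    ∑ i, r s i = ∑ i, r t i := by
  have hmass : ∀ s, HasDerivAt (fun u => ∑ i, r u i) 0 s := fun s => by
    simpa [sum_sub_mul_eq_zero_of_mul_sum_eq (hmean s)] using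
      HasDerivAt.fun_sum fun i (_ : i ∈ univ) => hflow s i
  exact is_const_of_deriv_eq_zero (fun s => (hmass s).differentiableAt)
    (fun s => (hmass s).deriv) s t

theorem stmt9_general (N : ℕ) (M : Set (Fin N → ℝ))
    (K : (Fin N → ℝ) → Fin N → ℝ)
    (hSchlaefli : ∀ x ∈ M, HasFDerivAt (fun y => ∑ j, K y j * y j)
      (∑ i, K x i • (ContinuousLinearMap.proj i : (Fin N → ℝ) →L[ℝ] ℝ)) x)
    (lam : (Fin N → ℝ) → ℝ)
    (hlam : ∀ x, lam x = (∑ j, K x j * x j) / ∑ j, x j)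
    (r : ℝ → Fin N → ℝ) (hmem : ∀ s, r s ∈ M) (hpos : ∀ s i, 0 < r s i)
    (hflow : ∀ s i, HasDerivAt (fun u => r u i) ((lam (r s) - K (r s) i) * r s i) s)
    (t : ℝ) :
    HasDerivAt (fun s => lam (r s))
      (-(∑ i, r t i)⁻¹ * ∑ i, r t i * (K (r t) i - lam (r t)) ^ 2) t ∧
    -(∑ i, r t i)⁻¹ * ∑ i, r t i * (K (r t) i - lam (r t)) ^ 2 ≤ 0 ∧
    ((¬ ∀ i j, K (r t) i = K (r t) j) →
      -(∑ i, r t i)⁻¹ * ∑ i, r t i * (K (r t) i - lam (r t)) ^ 2 < 0) := by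
  have hmean : ∀ s, lam (r s) * ∑ i, r s i = ∑ i, K (r s) i * r s i := fun s => by
    rw [hlam]
    exact div_sum_mul_sum_eq_of_nonneg _ _ fun i => (hpos s i).le
  have hlam_eq : (fun s => lam (r s)) = fun s => (∑ j, K (r s) j * r s j) * (∑ i, r t i)⁻¹ :=
    funext fun s => by rw [hlam, sum_eq_of_hasDerivAt_sum_sub_mul hmean hflow s t, div_eq_mul_inv]
  have hS : HasDerivAt (fun s => ∑ j, K (r s) j * r s j)
      (-∑ i, r t i * (K (r t) i - lam (r t)) ^ 2) t := by
    rw [← sum_mul_sub_mul_eq_neg_sum_mul_sq_of_mul_sum_eq (hmean t)]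
    exact (hSchlaefli (r t) (hmem t)).comp_hasDerivAt_of_sum_smul_proj (hflow t)
  refine ⟨?_, neg_inv_sum_mul_sum_mul_sq_nonpos fun i => (hpos t i).le,
    neg_inv_sum_mul_sum_mul_sq_neg (hpos t)⟩
  rw [hlam_eq, neg_mul_comm, mul_comm]
  exact hS.mul_const _

theorem stmt9 (N : ℕ) (M : Set (Fin N → ℝ)) (hM : IsOpen M)
    (K : (Fin N → ℝ) → Fin N → ℝ)
    (hSchlaefli : ∀ x ∈ M, HasFDerivAt (fun y => ∑ j, K y j * y j)
      (∑ i, K x i • (ContinuousLinearMap.proj i : (Fin N → ℝ) →L[ℝ] ℝ)) x)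
    (lam : (Fin N → ℝ) → ℝ)
    (hlam : ∀ x, lam x = (∑ j, K x j * x j) / ∑ j, x j)
    (r : ℝ → Fin N → ℝ) (hmem : ∀ s, r s ∈ M) (hpos : ∀ s i, 0 < r s i)
    (hflow : ∀ s i, HasDerivAt (fun u => r u i) ((lam (r s) - K (r s) i) * r s i) s)
    (t : ℝ) :
    HasDerivAt (fun s => lam (r s))
      (-(∑ i, r t i)⁻¹ * ∑ i, r t i * (K (r t) i - lam (r t)) ^ 2) t ∧
    -(∑ i, r t i)⁻¹ * ∑ i, r t i * (K (r t) i - lam (r t)) ^ 2 ≤ 0 ∧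
    ((¬ ∀ i j, K (r t) i = K (r t) j) →
      -(∑ i, r t i)⁻¹ * ∑ i, r t i * (K (r t) i - lam (r t)) ^ 2 < 0) :=
  stmt9_general N M K hSchlaefli lam hlam r hmem hpos hflow t
end

section
/- Suppose $\widetilde{K}: \mathbb{R}^N_{>0} \to \mathbb{R}^N$ is continuous with $|\widetilde{K}_i(r)| \leq C$ for all $r$ and $i$, and let $\tilde{\lambda}(r) = \sum_i \widetilde{K}_i r_i / \sum_i r_i$. Then for any initial value $r(0) \in \mathbb{R}^N_{>0}$, the ODE system $r_i' = (\tilde{\lambda}(r) - \widetilde{K}_i(r)) r_i$ has a solution defined for all $t \in [0, +\infty)$. -/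
/-!
In the coordinates `u = log r` the flow becomes the autonomous system `u' = λ̃(eᵘ) - K(eᵘ)`,
whose right-hand side is continuous and bounded by `2C`; positivity of `r = eᵘ` is then automatic.
For a bounded continuous field Peano's theorem holds for all times at once: the Euler polygons
of step `1/(m+1)` are uniformly Lipschitz, so by Arzelà–Ascoli a subsequence converges locally
uniformly on `ℝ`, and dominated convergence passes the integral equation to the limit.
-/

open Set Filter Topology MeasureTheory Real
open scoped NNReal

section Lipschitz

variable {X E : Type*} [PseudoMetricSpace X] [MetricSpace E] [ProperSpace E]

theorem isCompact_setOf_lipschitzWith (K : ℝ≥0) (x₀ : X) (y₀ : E) :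
    IsCompact {f : C(X, E) | LipschitzWith K f ∧ f x₀ = y₀} := by
  refine ArzelaAscoli.isCompact_of_equicontinuous _ ?_ ?_
  · have himage : ContinuousMap.toFun '' {f : C(X, E) | LipschitzWith K f ∧ f x₀ = y₀} =
        {f : X → E | LipschitzWith K f ∧ f x₀ = y₀} := by
      ext f
      exact ⟨fun ⟨f, hf, hf'⟩ => hf' ▸ hf, fun hf => ⟨⟨f, hf.1.continuous⟩, hf, rfl⟩⟩
    rw [himage]
    refine (isCompact_univ_pi fun x => isCompact_closedBall y₀ (K * dist x x₀)).of_isClosed_subset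
      ((isClosed_setOfPred_lipschitzWith K).inter
        (isClosed_eq (continuous_apply x₀) continuous_const)) ?_
    rintro f ⟨hf, hf₀⟩ x -
    rw [Metric.mem_closedBall, ← hf₀]
    exact hf.dist_le_mul x x₀
  · refine Metric.equicontinuous_of_continuity_modulus (fun d => K * d) ?_ _
      fun x y f => f.2.1.dist_le_mul x y
    simpa using (continuous_const_mul (K : ℝ)).tendsto 0

theorem exists_subseq_tendsto_of_lipschitzWith [ProperSpace X] {K : ℝ≥0} {f : ℕ → C(X, E)}
    (hf : ∀ m, LipschitzWith K (f m)) {x₀ : X} {y₀ : E} (hf₀ : ∀ m, f m x₀ = y₀) :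
    ∃ F : C(X, E), ∃ φ : ℕ → ℕ, StrictMono φ ∧ Tendsto (f ∘ φ) atTop (𝓝 F) := by
  obtain ⟨F, -, φ, hφ, hF⟩ :=
    (isCompact_setOf_lipschitzWith K x₀ y₀).tendsto_subseq fun m => ⟨hf m, hf₀ m⟩
  exact ⟨F, φ, hφ, hF⟩

end Lipschitz

section Euler

variable {E : Type*} [NormedAddCommGroup E] [NormedSpace ℝ E]

noncomputable def eulerSeq (g : E → E) (x₀ : E) (h : ℝ) : ℕ → E
  | 0 => x₀
  | k + 1 => eulerSeq g x₀ h k + h • g (eulerSeq g x₀ h k)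

noncomputable def eulerStepFun (g : E → E) (x₀ : E) (m : ℕ) (s : ℝ) : E :=
  eulerSeq g x₀ (m + 1 : ℝ)⁻¹ ⌊s * (m + 1)⌋₊

/-- The Euler polygon of step `1 / (m + 1)` (see `eulerPolygon_natCast_div`), written as an
integral so that one can pass to the limit under the integral sign. -/
noncomputable def eulerPolygon (g : E → E) (x₀ : E) (m : ℕ) (t : ℝ) : E :=
  x₀ + ∫ s in (0 : ℝ)..t, g (eulerStepFun g x₀ m s)

variable {g : E → E} {x₀ : E} {m : ℕ}

theorem eulerStepFun_max_zero (s : ℝ) :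
    eulerStepFun g x₀ m (max s 0) = eulerStepFun g x₀ m s := by
  rcases le_total s 0 with hs | hs
  · have hm : (0 : ℝ) ≤ m + 1 := by positivity
    simp only [eulerStepFun, max_eq_right hs, zero_mul, Nat.floor_zero,
      Nat.floor_of_nonpos (mul_nonpos_of_nonpos_of_nonneg hs hm)]
  · rw [max_eq_left hs]

theorem eulerStepFun_eq_of_mem_Ico {k : ℕ} {s : ℝ}
    (hs : s ∈ Ico (k / (m + 1) : ℝ) ((k + 1) / (m + 1))) :
    eulerStepFun g x₀ m s = eulerSeq g x₀ (m + 1 : ℝ)⁻¹ k := by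
  have hm : (0 : ℝ) < m + 1 := by positivity
  rw [mem_Ico, div_le_iff₀ hm, lt_div_iff₀ hm] at hs
  rw [eulerStepFun, (Nat.floor_eq_iff ((Nat.cast_nonneg k).trans hs.1)).2 hs]

theorem stronglyMeasurable_eulerStepFun :
    StronglyMeasurable fun s => g (eulerStepFun g x₀ m s) :=
  StronglyMeasurable.of_discrete.comp_measurable (f := fun k => g (eulerSeq g x₀ _ k))
    (measurable_id.mul_const _).nat_floor

theorem eulerPolygon_zero : eulerPolygon g x₀ m 0 = x₀ := by
  simp [eulerPolygon]

variable {M : ℝ} (hg : ∀ x, ‖g x‖ ≤ M)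
include hg

theorem intervalIntegrable_eulerStepFun (a b : ℝ) :
    IntervalIntegrable (fun s => g (eulerStepFun g x₀ m s)) volume a b :=
  intervalIntegrable_const.mono_fun stronglyMeasurable_eulerStepFun.aestronglyMeasurable
    (.of_forall fun _ => (hg _).trans (Real.le_norm_self M))

theorem eulerPolygon_sub_eulerPolygon (a b : ℝ) :
    eulerPolygon g x₀ m b - eulerPolygon g x₀ m a = ∫ s in a..b, g (eulerStepFun g x₀ m s) := by
  rw [eulerPolygon, eulerPolygon, add_sub_add_left_eq_sub,
    intervalIntegral.integral_interval_sub_left (intervalIntegrable_eulerStepFun hg 0 b)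
      (intervalIntegrable_eulerStepFun hg 0 a)]

theorem dist_eulerPolygon_le (a b : ℝ) :
    dist (eulerPolygon g x₀ m a) (eulerPolygon g x₀ m b) ≤ M * dist a b := by
  rw [dist_eq_norm', eulerPolygon_sub_eulerPolygon hg, Real.dist_eq, abs_sub_comm]
  exact intervalIntegral.norm_integral_le_of_norm_le_const fun s _ => hg _

theorem lipschitzWith_eulerPolygon : LipschitzWith M.toNNReal (eulerPolygon g x₀ m) :=
  LipschitzWith.of_dist_le' (dist_eulerPolygon_le hg)

variable [CompleteSpace E]

theorem eulerPolygon_natCast_div (k : ℕ) :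
    eulerPolygon g x₀ m (k / (m + 1)) = eulerSeq g x₀ (m + 1 : ℝ)⁻¹ k := by
  induction k with
  | zero => simp [eulerPolygon_zero, eulerSeq]
  | succ k ih =>
    have hle : (k / (m + 1) : ℝ) ≤ (k + 1) / (m + 1) := by gcongr; linarith
    have hstep : ∫ s in (k / (m + 1) : ℝ)..((k + 1) / (m + 1)), g (eulerStepFun g x₀ m s) =
        (m + 1 : ℝ)⁻¹ • g (eulerSeq g x₀ (m + 1 : ℝ)⁻¹ k) := by
      rw [intervalIntegral.integral_congr_Ioo_of_le hle
          fun s hs => congrArg g (eulerStepFun_eq_of_mem_Ico (Ioo_subset_Ico_self hs)),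
        intervalIntegral.integral_const]
      congr 1
      field_simp
      ring
    have hsplit := eulerPolygon_sub_eulerPolygon (x₀ := x₀) (m := m) hg
      (k / (m + 1)) ((k + 1) / (m + 1))
    rw [hstep, ih, sub_eq_iff_eq_add'] at hsplit
    push_cast
    rw [hsplit, eulerSeq]

theorem norm_eulerStepFun_sub_eulerPolygon_le {s : ℝ} (hs : 0 ≤ s) :
    ‖eulerStepFun g x₀ m s - eulerPolygon g x₀ m s‖ ≤ M / (m + 1) := by
  have hm : (0 : ℝ) < m + 1 := by positivity
  set k := ⌊s * (m + 1)⌋₊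
  have hk : (k / (m + 1) : ℝ) ≤ s := (div_le_iff₀ hm).2 (Nat.floor_le (by positivity))
  have hk' : s - k / (m + 1) ≤ 1 / (m + 1) := by
    rw [sub_le_iff_le_add, ← add_div, le_div_iff₀ hm]
    linarith [Nat.lt_floor_add_one (s * (m + 1))]
  rw [← dist_eq_norm, eulerStepFun, ← eulerPolygon_natCast_div hg, ← mul_one_div M]
  calc dist (eulerPolygon g x₀ m (k / (m + 1))) (eulerPolygon g x₀ m s)
      ≤ M * dist (k / (m + 1) : ℝ) s := dist_eulerPolygon_le hg _ _
    _ ≤ M * (1 / (m + 1)) := by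
      rw [Real.dist_eq, abs_sub_comm, abs_of_nonneg (sub_nonneg.2 hk)]
      exact mul_le_mul_of_nonneg_left hk' ((norm_nonneg _).trans (hg x₀))

theorem tendsto_eulerStepFun {x : ℝ → E} {φ : ℕ → ℕ} (hφ : StrictMono φ)
    (hx : ∀ t, Tendsto (fun k => eulerPolygon g x₀ (φ k) t) atTop (𝓝 (x t))) (s : ℝ) :
    Tendsto (fun k => eulerStepFun g x₀ (φ k) s) atTop (𝓝 (x (max s 0))) := by
  have hgap : Tendsto (fun k => eulerStepFun g x₀ (φ k) s - eulerPolygon g x₀ (φ k) (max s 0))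
      atTop (𝓝 0) := by
    have hstep : Tendsto (fun k => M / ((φ k : ℝ) + 1)) atTop (𝓝 0) := by
      simpa [Function.comp_def, div_eq_mul_inv] using
        (tendsto_one_div_add_atTop_nhds_zero_nat.const_mul M).comp hφ.tendsto_atTop
    refine squeeze_zero_norm (fun k => ?_) hstep
    rw [← eulerStepFun_max_zero s]
    exact norm_eulerStepFun_sub_eulerPolygon_le hg (le_max_right s 0)
  simpa using hgap.add (hx (max s 0))

theorem eq_integral_of_tendsto_eulerPolygon {x : ℝ → E} {φ : ℕ → ℕ} (hφ : StrictMono φ)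
    (hcont : Continuous g)
    (hx : ∀ t, Tendsto (fun k => eulerPolygon g x₀ (φ k) t) atTop (𝓝 (x t))) (t : ℝ) :
    x t = x₀ + ∫ s in (0 : ℝ)..t, g (x (max s 0)) := by
  refine tendsto_nhds_unique (hx t) (tendsto_const_nhds.add ?_)
  refine intervalIntegral.tendsto_integral_filter_of_dominated_convergence (fun _ => M)
    (.of_forall fun k => stronglyMeasurable_eulerStepFun.aestronglyMeasurable)
    (.of_forall fun k => .of_forall fun s _ => hg _) intervalIntegrable_const
    (.of_forall fun s _ => (hcont.tendsto _).comp (tendsto_eulerStepFun hg hφ hx s))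

end Euler

theorem exists_hasDerivAt_of_continuous_of_norm_le {E : Type*} [NormedAddCommGroup E]
    [NormedSpace ℝ E] [ProperSpace E] {g : E → E} (hcont : Continuous g) {M : ℝ}
    (hg : ∀ x, ‖g x‖ ≤ M) (x₀ : E) :
    ∃ x : ℝ → E, x 0 = x₀ ∧ ∀ t, 0 ≤ t → HasDerivAt x (g (x t)) t := by
  let polygon (m : ℕ) : C(ℝ, E) :=
    ⟨eulerPolygon g x₀ m, (lipschitzWith_eulerPolygon hg).continuous⟩
  obtain ⟨x, φ, hφ, hx⟩ := exists_subseq_tendsto_of_lipschitzWith (f := polygon)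
    (fun _ => lipschitzWith_eulerPolygon hg) (x₀ := 0) fun _ => eulerPolygon_zero
  have hint := eq_integral_of_tendsto_eulerPolygon hg hφ hcont
    fun t => ((continuous_eval_const t).tendsto x).comp hx
  refine ⟨x, by simpa using hint 0, fun t ht => ?_⟩
  -- thanks to `max s 0` the integrand is continuous on all of `ℝ`, so the derivative is two-sided
  have hintegrand : Continuous fun s => g (x (max s 0)) := by fun_prop
  have hderiv := (hintegrand.integral_hasStrictDerivAt 0 t).hasDerivAt.const_add x₀
  rw [max_eq_left ht] at hderiv
  exact hderiv.congr_of_eventuallyEq (.of_forall hint)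

section CombinatorialYamabe

variable {ι : Type*}

theorem abs_sum_mul_div_sum_le {s : Finset ι} {f w : ι → ℝ} {C : ℝ}
    (hw : ∀ i ∈ s, 0 ≤ w i) (hsum : 0 < ∑ i ∈ s, w i) (hf : ∀ i ∈ s, |f i| ≤ C) :
    |(∑ i ∈ s, f i * w i) / ∑ i ∈ s, w i| ≤ C := by
  rw [abs_div, abs_of_pos hsum, div_le_iff₀ hsum, Finset.mul_sum]
  calc |∑ i ∈ s, f i * w i| ≤ ∑ i ∈ s, |f i * w i| := Finset.abs_sum_le_sum_abs _ _
    _ ≤ ∑ i ∈ s, C * w i := Finset.sum_le_sum fun i hi => by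
      rw [abs_mul, abs_of_nonneg (hw i hi)]
      exact mul_le_mul_of_nonneg_right (hf i hi) (hw i hi)

variable [Fintype ι]

/-- The right-hand side `λ̃(r) - K(r)` of the flow in the coordinates `u = log r`, where
`λ̃(r) = ∑ K_j r_j / ∑ r_j`. -/
noncomputable def logYamabeField (K : (ι → ℝ) → ι → ℝ) (u : ι → ℝ) : ι → ℝ :=
  fun i => (∑ j, K (fun k => rexp (u k)) j * rexp (u j)) / (∑ j, rexp (u j)) -
    K (fun k => rexp (u k)) i

variable [Nonempty ι] {K : (ι → ℝ) → ι → ℝ}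

theorem continuous_logYamabeField (hK : Continuous K) : Continuous (logYamabeField K) := by
  have hsum : ∀ u : ι → ℝ, ∑ j, rexp (u j) ≠ 0 := fun u =>
    (Finset.sum_pos (fun j _ => exp_pos (u j)) Finset.univ_nonempty).ne'
  unfold logYamabeField
  fun_prop (disch := exact hsum _)

theorem norm_logYamabeField_le {C : ℝ} (hbound : ∀ r i, |K r i| ≤ C) (u : ι → ℝ) :
    ‖logYamabeField K u‖ ≤ 2 * C := by
  have hC : 0 ≤ C := (abs_nonneg _).trans (hbound 0 (Classical.arbitrary ι))
  refine (pi_norm_le_iff_of_nonneg (by positivity)).2 fun i => ?_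
  have havg := abs_sum_mul_div_sum_le (s := Finset.univ) (fun j _ => (exp_pos (u j)).le)
    (Finset.sum_pos (fun j _ => exp_pos (u j)) Finset.univ_nonempty)
    fun j _ => hbound (fun k => rexp (u k)) j
  rw [Real.norm_eq_abs, two_mul]
  exact (abs_sub _ _).trans (add_le_add havg (hbound _ i))

end CombinatorialYamabe

theorem stmt14_general (N : ℕ) (C : ℝ)
    (K : (Fin N → ℝ) → Fin N → ℝ) (hK : Continuous K)
    (hbound : ∀ x i, |K x i| ≤ C)
    (r0 : Fin N → ℝ) (h0 : ∀ i, 0 < r0 i) :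
    ∃ r : ℝ → Fin N → ℝ, r 0 = r0 ∧ (∀ t, 0 ≤ t → ∀ i, 0 < r t i) ∧
      ∀ t, 0 ≤ t → ∀ i, HasDerivAt (fun s => r s i)
        (((∑ j, K (r t) j * r t j) / (∑ j, r t j) - K (r t) i) * r t i) t := by
  cases isEmpty_or_nonempty (Fin N) with
  | inl _ => exact ⟨fun _ => r0, rfl, fun _ _ i => isEmptyElim i, fun _ _ i => isEmptyElim i⟩
  | inr _ =>
    obtain ⟨u, hu0, hu⟩ := exists_hasDerivAt_of_continuous_of_norm_le
      (continuous_logYamabeField hK) (norm_logYamabeField_le hbound) fun i => Real.log (r0 i)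
    refine ⟨fun t i => rexp (u t i), ?_, fun t _ i => exp_pos _, fun t ht i => ?_⟩
    · funext i
      simp only [hu0, exp_log (h0 i)]
    · rw [mul_comm]
      exact (hasDerivAt_pi.1 (hu t ht) i).exp

theorem stmt14 (N : ℕ) (C : ℝ) (hC : 0 < C)
    (K : (Fin N → ℝ) → Fin N → ℝ) (hK : Continuous K)
    (hbound : ∀ x i, |K x i| ≤ C)
    (r0 : Fin N → ℝ) (h0 : ∀ i, 0 < r0 i) :
    ∃ r : ℝ → Fin N → ℝ, r 0 = r0 ∧ (∀ t, 0 ≤ t → ∀ i, 0 < r t i) ∧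
      ∀ t, 0 ≤ t → ∀ i, HasDerivAt (fun s => r s i)
        (((∑ j, K (r t) j * r t j) / (∑ j, r t j) - K (r t) i) * r t i) t :=
  stmt14_general N C K hK hbound r0 h0
end

section
/- For a conformal Euclidean tetrahedron with tangent ball radii $r_i, r_j, r_k, r_l > 0$ where $r_i$ is minimal, the quantity $\frac{1}{r_i}\left(\frac{1}{r_j}+\frac{1}{r_k}+\frac{1}{r_l}\right)+\frac{1}{r_j}\left(\frac{1}{r_i}+\frac{1}{r_k}+\frac{1}{r_l}\right)-\left(\frac{1}{r_k}-\frac{1}{r_l}\right)^2$ is strictly positive. -/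
theorem sq_sub_lt_mul_add_mul_add {a b c d : ℝ} (hb : 0 ≤ b) (hc : 0 < c) (hd : 0 < d)
    (hca : c ≤ a) (hda : d ≤ a) :
    (c - d) ^ 2 < a * (b + c + d) + b * (a + c + d) := by
  have hsplit : a * (b + c + d) + b * (a + c + d) - (c - d) ^ 2
      = 2 * (a * b) + c * (a - c) + d * (a - d) + b * (c + d) + 2 * (c * d) := by ring
  have hab : 0 ≤ a * b := mul_nonneg (hc.le.trans hca) hb
  have hcac : 0 ≤ c * (a - c) := mul_nonneg hc.le (sub_nonneg.2 hca)
  have hdad : 0 ≤ d * (a - d) := mul_nonneg hd.le (sub_nonneg.2 hda)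
  have hbcd : 0 ≤ b * (c + d) := mul_nonneg hb (add_pos hc hd).le
  have hcd : 0 < c * d := mul_pos hc hd
  linarith

theorem stmt17 (ri rj rk rl : ℝ) (hi : 0 < ri) (hj : 0 < rj) (hk : 0 < rk) (hl : 0 < rl)
    (hmin : ri ≤ rj ∧ ri ≤ rk ∧ ri ≤ rl) :
    0 < 1 / ri * (1 / rj + 1 / rk + 1 / rl) + 1 / rj * (1 / ri + 1 / rk + 1 / rl)
      - (1 / rk - 1 / rl) ^ 2 := by
  obtain ⟨-, hik, hil⟩ := hmin
  have key := sq_sub_lt_mul_add_mul_add (a := 1 / ri) (one_div_pos.2 hj).le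
    (one_div_pos.2 hk) (one_div_pos.2 hl)
    (one_div_le_one_div_of_le hi hik) (one_div_le_one_div_of_le hi hil)
  linarith
end

section
/- Suppose continuous functions $\widetilde K_i$, $i \in V$, on $\mathbb{R}^N_{>0}$ satisfy: whenever $r_i$ is minimal and $r_p$ is maximal among the coordinates of $r$, one has $\widetilde K_p - \widetilde K_i \geq 0$ (equivalently the sum of extended solid angles at $i$ exceeds that at $p$). Then along any solution of $r_m' = (\tilde\lambda - \widetilde K_m) r_m$, the function $t \mapsto \min_{p,q} r_p(t)/r_q(t)$ is non-decreasing; consequently there exists $c > 1$ with $c^{-1} r_p(t) \leq r_q(t) \leq c\, r_p(t)$ for all $t \geq 0$ and all $p,q$. -/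
/-!
Write `m(x) = min_{p,q} x_p / x_q` for a positive vector `x`. Along the flow
`r_i' = (λ - K_i) r_i` every ratio obeys `(r_p / r_q)' = (K_q - K_p) (r_p / r_q)`, so `λ` cancels.
The right derivative of a finite minimum of differentiable functions is the derivative of one of
the minimising functions, and a pair `(p, q)` minimising `r_p / r_q` has `r_p` minimal and `r_q`
maximal; the comparison hypothesis then makes the right derivative of `m(r(t))` nonnegative, so
`m(r(t))` is non-decreasing. Hence `r_q(t) / r_p(t) ≥ m(r(0)) > 0` for all `t ≥ 0`, which is the
two-sided bound with `c = 1 + m(r(0))⁻¹`.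
-/

open Set Filter Topology

lemma monotoneOn_of_hasDerivWithinAt_Ioi_nonneg {h : ℝ → ℝ} {s : Set ℝ}
    (hs : s.OrdConnected) (hc : ContinuousOn h s)
    (hd : ∀ x ∈ s, ∃ d, 0 ≤ d ∧ HasDerivWithinAt h d (Ioi x) x) :
    MonotoneOn h s := by
  intro a ha b hb hab
  have hsub : Icc a b ⊆ s := hs.out ha hb
  have key := image_le_of_liminf_slope_right_le_deriv_boundary (f := fun t => -h t)
    (B := fun _ => -h a) (B' := 0) (hc.mono hsub).neg le_rfl continuousOn_const
    (fun x _ => hasDerivWithinAt_const _ _ _) ?_ ⟨hab, le_rfl⟩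
  · simpa using key
  intro x hx ε hε
  obtain ⟨d, hd0, hderiv⟩ := hd x (hsub (Ico_subset_Icc_self hx))
  have hslope := (hasDerivWithinAt_iff_tendsto_slope' self_notMem_Ioi).1 hderiv.neg
  exact (hslope.eventually (gt_mem_nhds ((neg_nonpos.2 hd0).trans_lt hε))).frequently

lemma continuousAt_ciInf_of_fintype {ι : Type*} [Fintype ι] [Nonempty ι] {f : ι → ℝ → ℝ}
    {x : ℝ} (hf : ∀ i, ContinuousAt (f i) x) : ContinuousAt (fun z => ⨅ i, f i z) x := by
  simpa only [Finset.inf'_univ_eq_ciInf] using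
    ContinuousAt.finset_inf'_apply Finset.univ_nonempty fun i _ => hf i

/-- Among the minimisers of `f · x`, one with the smallest derivative governs the right
derivative of the minimum. -/
lemma exists_hasDerivWithinAt_Ioi_ciInf {ι : Type*} [Finite ι] [Nonempty ι] {f : ι → ℝ → ℝ}
    {d : ι → ℝ} {x : ℝ} (hf : ∀ i, HasDerivAt (f i) (d i) x) :
    ∃ i, (∀ j, f i x ≤ f j x) ∧ HasDerivWithinAt (fun z => ⨅ j, f j z) (d i) (Ioi x) x := by
  obtain ⟨i₀, hi₀⟩ := Finite.exists_min (f · x)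
  obtain ⟨i, hi, hdmin⟩ :=
    Set.exists_min_image {j | f j x = f i₀ x} d (Set.toFinite _) ⟨i₀, rfl⟩
  have hfmin : ∀ j, f i x ≤ f j x := fun j => hi ▸ hi₀ j
  refine ⟨i, hfmin, ?_⟩
  have hx : ⨅ j, f j x = f i x :=
    le_antisymm (ciInf_le (Finite.bddBelow_range _) i) (le_ciInf hfmin)
  have hslope : ∀ j, Tendsto (slope (f j) x) (𝓝[>] x) (𝓝 (d j)) := fun j =>
    (hasDerivWithinAt_iff_tendsto_slope' self_notMem_Ioi).1 (hf j).hasDerivWithinAt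
  rw [hasDerivWithinAt_iff_tendsto_slope' self_notMem_Ioi]
  refine tendsto_order.2 ⟨fun a ha => ?_, fun b hb => ?_⟩
  · have hlower : ∀ j, ∀ᶠ z in 𝓝[>] x, a * (z - x) < f j z - f i x := by
      intro j
      rcases (hfmin j).eq_or_lt with hj | hj
      · have hdj : a < d j := ha.trans_le (hdmin j (hj.symm.trans hi))
        filter_upwards [(hslope j).eventually (lt_mem_nhds hdj), self_mem_nhdsWithin]
          with z hz hzx
        rwa [slope_def_field, lt_div_iff₀ (sub_pos.2 hzx), ← hj] at hz
      · have hcont : ContinuousAt (fun z => f j z - f i x - a * (z - x)) x := by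
          have := (hf j).continuousAt
          fun_prop
        have hpos := hcont.eventually
          (lt_mem_nhds (show (0 : ℝ) < f j x - f i x - a * (x - x) by simpa using hj))
        filter_upwards [nhdsWithin_le_nhds hpos] with z hz
        linarith
    filter_upwards [eventually_all.2 hlower, self_mem_nhdsWithin] with z hz hzx
    obtain ⟨j, hj⟩ := exists_eq_ciInf_of_finite (f := fun j => f j z)
    rw [slope_def_field, hx, lt_div_iff₀ (sub_pos.2 hzx), ← hj]
    exact hz j
  · filter_upwards [(hslope i).eventually (gt_mem_nhds hb), self_mem_nhdsWithin] with z hz hzx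
    refine lt_of_le_of_lt ?_ hz
    rw [slope_def_field, slope_def_field, hx]
    exact div_le_div_of_nonneg_right
      (sub_le_sub_right (ciInf_le (Finite.bddBelow_range _) i) _) (sub_pos.2 hzx).le

lemma HasDerivAt.div_of_rates {u v : ℝ → ℝ} {a b c x : ℝ} (hu : HasDerivAt u ((c - a) * u x) x)
    (hv : HasDerivAt v ((c - b) * v x) x) (hv0 : v x ≠ 0) :
    HasDerivAt (fun t => u t / v t) ((b - a) * (u x / v x)) x := by
  refine (hu.div hv hv0).congr_deriv ?_
  field_simp
  ring

noncomputable def minRatio {ι : Type*} (x : ι → ℝ) : ℝ := ⨅ p, ⨅ q, x p / x q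

section minRatio

variable {ι : Type*} [Finite ι] {x : ι → ℝ}

lemma minRatio_eq_iInf_prod : minRatio x = ⨅ pq : ι × ι, x pq.1 / x pq.2 :=
  (Finite.ciInf_prod (fun pq : ι × ι => x pq.1 / x pq.2)).symm

lemma minRatio_le_div (p q : ι) : minRatio x ≤ x p / x q := by
  rw [minRatio_eq_iInf_prod]
  exact ciInf_le (Finite.bddBelow_range _) (p, q)

lemma minRatio_pos [Nonempty ι] (hx : ∀ i, 0 < x i) : 0 < minRatio x := by
  obtain ⟨pq, hpq⟩ := exists_eq_ciInf_of_finite (f := fun pq : ι × ι => x pq.1 / x pq.2)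
  rw [minRatio_eq_iInf_prod, ← hpq]
  exact div_pos (hx _) (hx _)

end minRatio

lemma forall_le_and_le_of_forall_div_le {ι : Type*} {x : ι → ℝ} (hx : ∀ i, 0 < x i) {p q : ι}
    (h : ∀ p' q', x p / x q ≤ x p' / x q') : (∀ m, x p ≤ x m) ∧ (∀ m, x m ≤ x q) :=
  ⟨fun m => (div_le_div_iff_of_pos_right (hx q)).1 (h m q),
    fun m => (div_le_div_iff_of_pos_left (hx p) (hx q) (hx m)).1 (h p m)⟩

theorem monotoneOn_minRatio {ι : Type*} [Fintype ι] [Nonempty ι] {s : Set ℝ}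
    (hs : s.OrdConnected) {r : ℝ → ι → ℝ} {lam : ℝ → ℝ} {κ : ℝ → ι → ℝ}
    (hpos : ∀ t ∈ s, ∀ i, 0 < r t i)
    (hflow : ∀ t ∈ s, ∀ i, HasDerivAt (fun z => r z i) ((lam t - κ t i) * r t i) t)
    (hcomp : ∀ t ∈ s, ∀ i p, (∀ m, r t i ≤ r t m) → (∀ m, r t m ≤ r t p) → κ t i ≤ κ t p) :
    MonotoneOn (fun t => minRatio (r t)) s := by
  have hratio : ∀ t ∈ s, ∀ pq : ι × ι, HasDerivAt (fun z => r z pq.1 / r z pq.2)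
      ((κ t pq.2 - κ t pq.1) * (r t pq.1 / r t pq.2)) t := fun t ht pq =>
    (hflow t ht pq.1).div_of_rates (hflow t ht pq.2) (hpos t ht pq.2).ne'
  simp only [minRatio_eq_iInf_prod]
  refine monotoneOn_of_hasDerivWithinAt_Ioi_nonneg hs (fun t ht =>
    (continuousAt_ciInf_of_fintype fun pq => (hratio t ht pq).continuousAt).continuousWithinAt)
    fun t ht => ?_
  obtain ⟨⟨p, q⟩, hmin, hderiv⟩ := exists_hasDerivWithinAt_Ioi_ciInf (hratio t ht)
  obtain ⟨hp, hq⟩ := forall_le_and_le_of_forall_div_le (hpos t ht) fun p' q' => hmin (p', q')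
  exact ⟨_, mul_nonneg (sub_nonneg.2 (hcomp t ht p q hp hq))
    (div_pos (hpos t ht p) (hpos t ht q)).le, hderiv⟩

lemma one_add_inv_bounds_of_le_div {m u v : ℝ} (hm : 0 < m) (hu : 0 < u) (hv : 0 < v)
    (hvu : m ≤ v / u) (huv : m ≤ u / v) :
    (1 + m⁻¹)⁻¹ * u ≤ v ∧ v ≤ (1 + m⁻¹) * u := by
  rw [le_div_iff₀ hu] at hvu
  rw [le_div_iff₀ hv] at huv
  constructor
  · calc (1 + m⁻¹)⁻¹ * u ≤ m * u := by
          gcongr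
          exact inv_le_of_inv_le₀ hm (le_add_of_nonneg_left zero_le_one)
      _ ≤ v := hvu
  · calc v ≤ m⁻¹ * u := by rw [inv_mul_eq_div, le_div_iff₀ hm, mul_comm]; exact huv
      _ ≤ (1 + m⁻¹) * u := by gcongr; exact le_add_of_nonneg_left zero_le_one

theorem stmt18 (N : ℕ) (hN : 0 < N)
    (K : (Fin N → ℝ) → Fin N → ℝ)
    (hcomp : ∀ x : Fin N → ℝ, (∀ m, 0 < x m) → ∀ i p : Fin N,
      (∀ m, x i ≤ x m) → (∀ m, x m ≤ x p) → 0 ≤ K x p - K x i)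
    (r : ℝ → Fin N → ℝ) (hpos : ∀ t, 0 ≤ t → ∀ i, 0 < r t i)
    (hflow : ∀ t, 0 ≤ t → ∀ i, HasDerivAt (fun s => r s i)
      (((∑ j, K (r t) j * r t j) / (∑ j, r t j) - K (r t) i) * r t i) t) :
    MonotoneOn (fun t => ⨅ p : Fin N, ⨅ q : Fin N, r t p / r t q) (Set.Ici (0:ℝ)) ∧
    ∃ c : ℝ, 1 < c ∧ ∀ t, 0 ≤ t → ∀ p q : Fin N,
      c⁻¹ * r t p ≤ r t q ∧ r t q ≤ c * r t p := by
  have : Nonempty (Fin N) := ⟨⟨0, hN⟩⟩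
  have hmono : MonotoneOn (fun t => minRatio (r t)) (Ici 0) :=
    monotoneOn_minRatio ordConnected_Ici hpos hflow
      fun t ht i p hi hp => sub_nonneg.1 (hcomp (r t) (hpos t ht) i p hi hp)
  have hm₀ : 0 < minRatio (r 0) := minRatio_pos (hpos 0 le_rfl)
  refine ⟨hmono, 1 + (minRatio (r 0))⁻¹, lt_add_of_pos_right _ (inv_pos.2 hm₀),
    fun t ht p q => ?_⟩
  have hbound : ∀ p q, minRatio (r 0) ≤ r t p / r t q := fun p q =>
    (hmono self_mem_Ici ht ht).trans (minRatio_le_div p q)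
  exact one_add_inv_bounds_of_le_div hm₀ (hpos t ht p) (hpos t ht q) (hbound q p) (hbound p q)
end
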